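/- arXiv:1711.04499 — 7 statements merged into one kernel-verified Lean document; each statement's English description precedes it below -/
import Mathlib

section
/- For every real number N ≥ 4, the inequality (N−4)u² + 3x(N−3)u + 3x²(N−2) ≥ 0 holds for all x > 0 and all u ≥ −x. -/
theorem grushin_quadratic_nonneg (N : ℝ) (hN : 4 ≤ N) :
    ∀ x u : ℝ, 0 < x → -x ≤ u →
      0 ≤ (N - 4) * u ^ 2 + 3 * x * (N - 3) * u + 3 * x ^ 2 * (N - 2) := by
  intro x u hx hu
  nlinarith [sq_nonneg (u + x), mul_nonneg (sub_nonneg.2 hN) (sq_nonneg (u + x)),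
    mul_nonneg (mul_nonneg (by linarith : (0:ℝ) ≤ N - 1) hx.le) (by linarith : (0:ℝ) ≤ u + x),
    mul_pos hx hx]
end

section
/- If N < 4, then there exist x > 0 and u ≥ −x such that (N−4)u² + 3x(N−3)u + 3x²(N−2) < 0. -/
/-! Fix `x = 1`. As a polynomial in `u` the form has leading coefficient `N - 4 < 0`, so it tends
to `-∞` as `u → ∞` and in particular is negative for some large `u ≥ -1`. -/

open Filter

section

variable {K : Type*} [Field K] [LinearOrder K] [IsStrictOrderedRing K] {a : K}

theorem tendsto_quadratic_atBot_of_neg (b c : K) (ha : a < 0) :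
    Tendsto (fun u => a * u ^ 2 + b * u + c) atTop atBot := by
  have hlin : Tendsto (fun u => a * u + b) atTop atBot :=
    tendsto_atBot_add_const_right _ b (tendsto_id.const_mul_atTop_of_neg ha)
  refine (tendsto_atBot_add_const_right _ c (hlin.atBot_mul_atTop₀ tendsto_id)).congr fun u => ?_
  simp only [id]
  ring

theorem exists_ge_quadratic_neg_of_neg (b c : K) (ha : a < 0) (u₀ : K) :
    ∃ u, u₀ ≤ u ∧ a * u ^ 2 + b * u + c < 0 :=
  ((eventually_ge_atTop u₀).and
    ((tendsto_quadratic_atBot_of_neg b c ha).eventually (eventually_lt_atBot 0))).exists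

end

theorem grushin_quadratic_fails (N : ℝ) (hN : N < 4) :
    ∃ x u : ℝ, 0 < x ∧ -x ≤ u ∧
      (N - 4) * u ^ 2 + 3 * x * (N - 3) * u + 3 * x ^ 2 * (N - 2) < 0 := by
  obtain ⟨u, hu, hneg⟩ :=
    exists_ge_quadratic_neg_of_neg (3 * (N - 3)) (3 * (N - 2)) (sub_neg.mpr hN) (-1)
  exact ⟨1, u, one_pos, hu, by simpa only [mul_one, one_pow] using hneg⟩
end

section
/- For all real x > 0, u ≥ −x, and t ∈ [0,1], one has (t²u² + 3tux + 3x²)/(u² + 3ux + 3x²) ≥ t², and moreover the denominator u² + 3ux + 3x² is strictly positive. -/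
theorem grushin_horizontal_jacobian_ratio (x u t : ℝ) (hx : 0 < x) (hu : -x ≤ u)
    (ht : t ∈ Set.Icc (0 : ℝ) 1) :
    0 < u ^ 2 + 3 * u * x + 3 * x ^ 2 ∧
    (t ^ 2 * u ^ 2 + 3 * t * u * x + 3 * x ^ 2) / (u ^ 2 + 3 * u * x + 3 * x ^ 2)
      ≥ t ^ 2 := by
  obtain ⟨ht0, ht1⟩ := ht
  have hpos : 0 < u ^ 2 + 3 * u * x + 3 * x ^ 2 := by nlinarith [sq_nonneg (u + 3*x/2)]
  refine ⟨hpos, ?_⟩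
  rw [ge_iff_le, le_div_iff₀ hpos]
  nlinarith [mul_nonneg (mul_nonneg ht0 (sub_nonneg.2 ht1)) (mul_pos hx hx).le,
    mul_nonneg (sub_nonneg.2 ht1) (mul_nonneg ht0 hx.le), sq_nonneg (1 - t),
    mul_nonneg (mul_nonneg (sub_nonneg.2 ht1) hx.le) (add_nonneg (by nlinarith : (0:ℝ) ≤ t*u + t*x) (by nlinarith : (0:ℝ) ≤ x))]
end

section
/- Let v ∈ (0, π) and a ∈ ℝ, a ≠ 0, satisfy a²·cos(v) + a·sin(v) ≥ 0. Then 2a²·cos(v) + a·(2·sin(v) − v·cos(v)) ≥ 0. -/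
open Real

lemma Real.mul_cos_lt_sin {x : ℝ} (hx₀ : 0 < x) (hxπ : x < π) : x * cos x < sin x := by
  have hsin : 0 < sin x := sin_pos_of_pos_of_lt_pi hx₀ hxπ
  rcases le_or_gt (cos x) 0 with hcos | hcos
  · exact (mul_nonpos_of_nonneg_of_nonpos hx₀.le hcos).trans_lt hsin
  · have hxπ2 : x < π / 2 := by
      by_contra! h
      exact hcos.not_ge (cos_nonpos_of_pi_div_two_le_of_le h (by linarith))
    calc x * cos x < tan x * cos x := mul_lt_mul_of_pos_right (lt_tan hx₀ hxπ2) hcos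
      _ = sin x := by rw [tan_eq_sin_div_cos, div_mul_cancel₀ _ hcos.ne']

/-- With `c = cos v`, `s = sin v`: the hypothesis says `a * (a * c + s) ≥ 0` and the conclusion
is `2 * a * (a * c + s) - v * (a * c) ≥ 0`, so only `a * c > 0` needs an argument, and then
`a * c + s > 0` forces `a ≥ 0`. -/
lemma two_mul_sq_mul_add_mul_nonneg_of_sq_mul_add_mul_nonneg {R : Type*} [CommRing R]
    [LinearOrder R] [IsStrictOrderedRing R] {a c s v : R} (hv : 0 ≤ v) (hs : 0 ≤ s)
    (hvc : v * c ≤ s) (h : 0 ≤ a ^ 2 * c + a * s) :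
    0 ≤ 2 * a ^ 2 * c + a * (2 * s - v * c) := by
  rcases le_or_gt (a * c) 0 with hac | hac
  · linear_combination 2 * h + mul_nonneg hv (neg_nonneg.mpr hac)
  · have ha : 0 ≤ a :=
      nonneg_of_mul_nonneg_left (by linear_combination h) (by linarith : 0 < a * c + s)
    have hfactor : 0 ≤ 2 * (a * c) + s + (s - v * c) := by linarith
    linear_combination mul_nonneg ha hfactor

theorem easier_quadratic_general (v a : ℝ) (hv : v ∈ Set.Ioo 0 Real.pi)
    (hadm : a ^ 2 * Real.cos v + a * Real.sin v ≥ 0) :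
    2 * a ^ 2 * Real.cos v + a * (2 * Real.sin v - v * Real.cos v) ≥ 0 := by
  obtain ⟨hv₀, hvπ⟩ := hv
  exact two_mul_sq_mul_add_mul_nonneg_of_sq_mul_add_mul_nonneg hv₀.le
    (sin_pos_of_pos_of_lt_pi hv₀ hvπ).le (mul_cos_lt_sin hv₀ hvπ).le hadm

theorem easier_quadratic (v a : ℝ) (hv : v ∈ Set.Ioo 0 Real.pi) (ha : a ≠ 0)
    (hadm : a ^ 2 * Real.cos v + a * Real.sin v ≥ 0) :
    2 * a ^ 2 * Real.cos v + a * (2 * Real.sin v - v * Real.cos v) ≥ 0 :=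
  easier_quadratic_general v a hv hadm
end

section
/- Let v ∈ (0, π) and a ∈ ℝ, a ≠ 0, satisfy a²·cos(v) + a·sin(v) ≥ 0. Then (3·sin(v) − v·cos(v))·a² + v·(2·sin(v) − v·cos(v))·a + (3·sin(v) − 3v·cos(v) − v²·sin(v)) ≥ 0. -/
/-!
Write `s = sin v`, `c = cos v`. On `[0, π]` both `s - v c` and `3s - 3vc - v²s` vanish at `0` and
have nonnegative derivatives `v s` and `v (s - v c)`, so they are nonnegative there. For `a ≥ 0` all
three coefficients of the quadratic `Q(a)` are then nonnegative. For `a < 0` admissibility says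
`a c + s ≤ 0`, which forces `c > 0`, and the polynomial identity
`c² Q(a) = 3 (s - v c)(s² + c²) + (a c + s) ((3s - v c)(a c - s) + v c (2s - v c))`
finishes, since `a c - s ≤ -2s` makes the last factor at most `-(2s² + (2s - v c)²) ≤ 0`.
-/

open Real Set

lemma nonneg_of_hasDerivAt_of_zero {f f' : ℝ → ℝ} {x : ℝ} (hf : ∀ t, HasDerivAt f (f' t) t)
    (hf0 : f 0 = 0) (hf' : ∀ t ∈ Ioo 0 x, 0 ≤ f' t) (hx : 0 ≤ x) : 0 ≤ f x := by
  have hmono : MonotoneOn f (Icc 0 x) :=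
    monotoneOn_of_hasDerivWithinAt_nonneg (convex_Icc 0 x)
      (continuous_iff_continuousAt.2 fun t => (hf t).continuousAt).continuousOn
      (fun t _ => (hf t).hasDerivWithinAt)
      (by rwa [interior_Icc])
  simpa [hf0] using hmono (left_mem_Icc.mpr hx) (right_mem_Icc.mpr hx) hx

lemma sin_sub_mul_cos_nonneg {x : ℝ} (hx0 : 0 ≤ x) (hxπ : x ≤ π) : 0 ≤ sin x - x * cos x := by
  refine nonneg_of_hasDerivAt_of_zero (f := fun t => sin t - t * cos t)
    (f' := fun t => t * sin t) (fun t => ?_) (by simp)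
    (fun t ht => mul_nonneg ht.1.le (sin_nonneg_of_nonneg_of_le_pi ht.1.le (by linarith [ht.2])))
    hx0
  exact ((hasDerivAt_sin t).sub ((hasDerivAt_id' t).mul (hasDerivAt_cos t))).congr_deriv (by ring)

lemma three_sin_sub_three_mul_cos_sub_sq_mul_sin_nonneg {x : ℝ} (hx0 : 0 ≤ x) (hxπ : x ≤ π) :
    0 ≤ 3 * sin x - 3 * x * cos x - x ^ 2 * sin x := by
  refine nonneg_of_hasDerivAt_of_zero (f := fun t => 3 * sin t - 3 * t * cos t - t ^ 2 * sin t)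
    (f' := fun t => t * (sin t - t * cos t)) (fun t => ?_) (by simp)
    (fun t ht => mul_nonneg ht.1.le (sin_sub_mul_cos_nonneg ht.1.le (by linarith [ht.2]))) hx0
  exact ((((hasDerivAt_sin t).const_mul 3).sub
    (((hasDerivAt_id' t).const_mul 3).mul (hasDerivAt_cos t))).sub
    ((hasDerivAt_pow 2 t).mul (hasDerivAt_sin t))).congr_deriv (by ring)

lemma quadratic_nonneg_of_nonneg {s c v a : ℝ} (hv : 0 ≤ v) (hs : 0 ≤ s) (hg : 0 ≤ s - v * c)
    (hf : 0 ≤ 3 * s - 3 * v * c - v ^ 2 * s) (ha : 0 ≤ a) :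
    0 ≤ (3 * s - v * c) * a ^ 2 + v * (2 * s - v * c) * a + (3 * s - 3 * v * c - v ^ 2 * s) := by
  have hc₂ : 0 ≤ 3 * s - v * c := by linarith
  have hc₁ : 0 ≤ 2 * s - v * c := by linarith
  positivity

lemma quadratic_nonneg_of_neg {s c v a : ℝ} (hs : 0 < s) (hg : 0 ≤ s - v * c) (ha : a < 0)
    (hadm : 0 ≤ a ^ 2 * c + a * s) :
    0 ≤ (3 * s - v * c) * a ^ 2 + v * (2 * s - v * c) * a + (3 * s - 3 * v * c - v ^ 2 * s) := by
  have hacs : a * c + s ≤ 0 := by nlinarith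
  have hc : 0 < c := by nlinarith
  have hfactor : (3 * s - v * c) * (a * c - s) + v * c * (2 * s - v * c) ≤ 0 := by
    nlinarith [sq_nonneg (2 * s - v * c)]
  have hkey : 0 ≤ c ^ 2 * ((3 * s - v * c) * a ^ 2 + v * (2 * s - v * c) * a
      + (3 * s - 3 * v * c - v ^ 2 * s)) := by
    calc (0 : ℝ) ≤ 3 * (s - v * c) * (s ^ 2 + c ^ 2)
          + (a * c + s) * ((3 * s - v * c) * (a * c - s) + v * c * (2 * s - v * c)) :=
            add_nonneg (mul_nonneg (by linarith) (by positivity))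
              (mul_nonneg_of_nonpos_of_nonpos hacs hfactor)
      _ = _ := by ring
  exact nonneg_of_mul_nonneg_right hkey (by positivity)

theorem key_quadratic_general (v a : ℝ) (hv : v ∈ Set.Ioo 0 Real.pi)
    (hadm : a ^ 2 * Real.cos v + a * Real.sin v ≥ 0) :
    (3 * Real.sin v - v * Real.cos v) * a ^ 2
      + v * (2 * Real.sin v - v * Real.cos v) * a
      + (3 * Real.sin v - 3 * v * Real.cos v - v ^ 2 * Real.sin v) ≥ 0 := by
  obtain ⟨hv0, hvπ⟩ := hv
  have hs := sin_pos_of_pos_of_lt_pi hv0 hvπ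
  have hg := sin_sub_mul_cos_nonneg hv0.le hvπ.le
  rcases le_or_gt 0 a with ha | ha
  · exact quadratic_nonneg_of_nonneg hv0.le hs.le hg
      (three_sin_sub_three_mul_cos_sub_sq_mul_sin_nonneg hv0.le hvπ.le) ha
  · exact quadratic_nonneg_of_neg hs hg ha hadm

theorem key_quadratic (v a : ℝ) (hv : v ∈ Set.Ioo 0 Real.pi) (ha : a ≠ 0)
    (hadm : a ^ 2 * Real.cos v + a * Real.sin v ≥ 0) :
    (3 * Real.sin v - v * Real.cos v) * a ^ 2
      + v * (2 * Real.sin v - v * Real.cos v) * a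
      + (3 * Real.sin v - 3 * v * Real.cos v - v ^ 2 * Real.sin v) ≥ 0 :=
  key_quadratic_general v a hv hadm
end

section
/- For a ∈ ℝ, a ≠ 0, define f_a(v) = (1 + a·v + a²)·sin(v) − v·cos(v). If a²·cos(v) + a·sin(v) ≥ 0 for the given v ∈ (0, π) and this admissibility holds at all z ∈ (0, v], then f_a(t·v)/f_a(v) ≥ t³ for all t ∈ (0,1], where both f_a(tv) and f_a(v) are strictly positive. -/
noncomputable def grushinF (a v : ℝ) : ℝ :=
  (1 + a * v + a ^ 2) * Real.sin v - v * Real.cos v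

/-!
The inequality says that `z ↦ grushinF a z / z ^ 3` is antitone on `(0, v]`. Its derivative is
`-grushinQ a z / z ^ 4`, where `grushinQ a z` is a quadratic in `a` whose coefficients are positive
on `(0, π)`. For `a ≥ 0` this settles the sign; for `a < 0` admissibility reads `a cos z + sin z ≤ 0`,
and writing `grushinQ` in the variable `w = a cos z + sin z` gives
`cos² z · grushinQ a z = 3 (sin z - z cos z) - w ((z cos z - 2 sin z)² + 2 sin² z) + (3 sin z - z cos z) w²`,
which is positive for `w ≤ 0`.
-/

open Real Set

noncomputable def grushinQ (a z : ℝ) : ℝ :=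
  (3 * sin z - 3 * z * cos z - z ^ 2 * sin z) + a * (2 * z * sin z - z ^ 2 * cos z)
    + a ^ 2 * (3 * sin z - z * cos z)

lemma pos_of_hasDerivAt_pos_of_eq_zero {g g' : ℝ → ℝ} {b : ℝ} (hb : 0 < b) (hg0 : g 0 = 0)
    (hg : ∀ x, HasDerivAt g (g' x) x) (hg' : ∀ x ∈ Ioo 0 b, 0 < g' x) : 0 < g b := by
  have hmono : StrictMonoOn g (Icc 0 b) :=
    strictMonoOn_of_hasDerivWithinAt_pos (convex_Icc 0 b)
      (HasDerivAt.continuousOn fun x _ => hg x) (fun x _ => (hg x).hasDerivWithinAt)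
      (fun x hx => hg' x (by rwa [interior_Icc] at hx))
  simpa [hg0] using hmono (left_mem_Icc.2 hb.le) (right_mem_Icc.2 hb.le) hb

lemma sin_sub_mul_cos_pos {z : ℝ} (hz0 : 0 < z) (hzpi : z < π) : 0 < sin z - z * cos z := by
  refine pos_of_hasDerivAt_pos_of_eq_zero (g := fun x => sin x - x * cos x)
    (g' := fun x => x * sin x) hz0 (by simp) (fun x => ?_)
    (fun x hx => mul_pos hx.1 (sin_pos_of_pos_of_lt_pi hx.1 (hx.2.trans hzpi)))
  refine ((hasDerivAt_sin x).sub ((hasDerivAt_id x).mul (hasDerivAt_cos x))).congr_deriv ?_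
  simp only [id_eq]; ring

lemma three_sin_sub_three_mul_cos_sub_sq_mul_sin_pos {z : ℝ} (hz0 : 0 < z) (hzpi : z < π) :
    0 < 3 * sin z - 3 * z * cos z - z ^ 2 * sin z := by
  refine pos_of_hasDerivAt_pos_of_eq_zero
    (g := fun x => 3 * sin x - 3 * x * cos x - x ^ 2 * sin x)
    (g' := fun x => x * (sin x - x * cos x)) hz0 (by simp) (fun x => ?_)
    (fun x hx => mul_pos hx.1 (sin_sub_mul_cos_pos hx.1 (hx.2.trans hzpi)))
  refine ((((hasDerivAt_sin x).const_mul 3).sub (((hasDerivAt_id x).const_mul 3).mul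
    (hasDerivAt_cos x))).sub ((hasDerivAt_pow 2 x).mul (hasDerivAt_sin x))).congr_deriv ?_
  simp only [id_eq]; ring

lemma grushinF_eq (a z : ℝ) :
    grushinF a z = (1 + a ^ 2) * (sin z - z * cos z) + z * (a ^ 2 * cos z + a * sin z) := by
  unfold grushinF; ring

lemma grushinF_pos {a z : ℝ} (hz0 : 0 < z) (hzpi : z < π)
    (hadm : a ^ 2 * cos z + a * sin z ≥ 0) : 0 < grushinF a z := by
  rw [grushinF_eq]
  have := sin_sub_mul_cos_pos hz0 hzpi
  positivity

lemma sq_cos_mul_grushinQ (a z : ℝ) :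
    cos z ^ 2 * grushinQ a z = 3 * (sin z - z * cos z)
      - (a * cos z + sin z) * ((z * cos z - 2 * sin z) ^ 2 + 2 * sin z ^ 2)
      + (3 * sin z - z * cos z) * (a * cos z + sin z) ^ 2 := by
  have hpyth := sin_sq_add_cos_sq z
  unfold grushinQ
  linear_combination (3 * sin z - 3 * z * cos z) * hpyth

lemma grushinQ_pos {a z : ℝ} (hz0 : 0 < z) (hzpi : z < π)
    (hadm : a ^ 2 * cos z + a * sin z ≥ 0) : 0 < grushinQ a z := by
  have hs := sin_pos_of_pos_of_lt_pi hz0 hzpi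
  have hd := sin_sub_mul_cos_pos hz0 hzpi
  have hC : 0 < 3 * sin z - z * cos z := by linarith
  rcases lt_or_ge a 0 with ha | ha
  · have hw : a * cos z + sin z ≤ 0 :=
      nonpos_of_mul_nonneg_right (by linear_combination hadm) ha
    have hpos : 0 < cos z ^ 2 * grushinQ a z := by
      rw [sq_cos_mul_grushinQ]
      nlinarith [mul_nonneg (neg_nonneg.2 hw)
        (add_nonneg (sq_nonneg (z * cos z - 2 * sin z)) (sq_nonneg (sin z))),
        mul_nonneg hC.le (sq_nonneg (a * cos z + sin z))]
    exact pos_of_mul_pos_right hpos (sq_nonneg _)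
  · have hA := three_sin_sub_three_mul_cos_sub_sq_mul_sin_pos hz0 hzpi
    have hB : 0 ≤ 2 * z * sin z - z ^ 2 * cos z := by nlinarith
    unfold grushinQ
    positivity

lemma hasDerivAt_grushinF (a z : ℝ) :
    HasDerivAt (grushinF a) (a * sin z + (1 + a * z + a ^ 2) * cos z - (cos z - z * sin z)) z := by
  have hp : HasDerivAt (fun x : ℝ => 1 + a * x + a ^ 2) a z := by
    simpa using (((hasDerivAt_id z).const_mul a).const_add 1).add_const (a ^ 2)
  refine ((hp.mul (hasDerivAt_sin z)).sub
    ((hasDerivAt_id z).mul (hasDerivAt_cos z))).congr_deriv ?_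
  simp only [id_eq]; ring

lemma hasDerivAt_grushinF_div_pow_three (a : ℝ) {z : ℝ} (hz : z ≠ 0) :
    HasDerivAt (fun x => grushinF a x / x ^ 3) (-grushinQ a z / z ^ 4) z := by
  refine ((hasDerivAt_grushinF a z).div (hasDerivAt_pow 3 z) (pow_ne_zero 3 hz)).congr_deriv ?_
  unfold grushinF grushinQ
  field_simp
  ring

lemma antitoneOn_grushinF_div_pow_three {a v : ℝ} (hvpi : v < π)
    (hadm : ∀ z ∈ Ioc (0 : ℝ) v, a ^ 2 * cos z + a * sin z ≥ 0) :
    AntitoneOn (fun x => grushinF a x / x ^ 3) (Ioc 0 v) := by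
  refine antitoneOn_of_hasDerivWithinAt_nonpos (f' := fun z => -grushinQ a z / z ^ 4)
    (convex_Ioc 0 v)
    (HasDerivAt.continuousOn fun x hx => hasDerivAt_grushinF_div_pow_three a hx.1.ne')
    (fun x hx => ?_) (fun x hx => ?_) <;> rw [interior_Ioc] at hx
  · exact (hasDerivAt_grushinF_div_pow_three a hx.1.ne').hasDerivWithinAt
  · have := grushinQ_pos hx.1 (hx.2.trans hvpi) (hadm x ⟨hx.1, hx.2.le⟩)
    exact div_nonpos_of_nonpos_of_nonneg (by linarith) (by positivity)

theorem grushin_jacobian_contraction_general (a v : ℝ)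
    (hv : v ∈ Set.Ioo 0 Real.pi)
    (hadm : ∀ z ∈ Set.Ioc (0 : ℝ) v, a ^ 2 * Real.cos z + a * Real.sin z ≥ 0) :
    ∀ t ∈ Set.Ioc (0 : ℝ) 1,
      0 < grushinF a (t * v) ∧ 0 < grushinF a v ∧
      grushinF a (t * v) / grushinF a v ≥ t ^ 3 := by
  obtain ⟨hv0, hvpi⟩ := hv
  rintro t ⟨ht0, ht1⟩
  have htv0 : 0 < t * v := mul_pos ht0 hv0
  have htv : t * v ≤ v := mul_le_of_le_one_left hv0.le ht1
  have hftv := grushinF_pos htv0 (htv.trans_lt hvpi) (hadm _ ⟨htv0, htv⟩)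
  have hfv := grushinF_pos hv0 hvpi (hadm v ⟨hv0, le_rfl⟩)
  refine ⟨hftv, hfv, ?_⟩
  have hratio : grushinF a v / v ^ 3 ≤ grushinF a (t * v) / (t * v) ^ 3 :=
    antitoneOn_grushinF_div_pow_three hvpi hadm ⟨htv0, htv⟩ ⟨hv0, le_rfl⟩ htv
  rw [div_le_div_iff₀ (pow_pos hv0 3) (pow_pos htv0 3), mul_pow, ← mul_assoc,
    mul_le_mul_iff_of_pos_right (pow_pos hv0 3)] at hratio
  rw [ge_iff_le, le_div_iff₀ hfv, mul_comm]
  exact hratio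

theorem grushin_jacobian_contraction (a v : ℝ) (ha : a ≠ 0)
    (hv : v ∈ Set.Ioo 0 Real.pi)
    (hadm : ∀ z ∈ Set.Ioc (0 : ℝ) v, a ^ 2 * Real.cos z + a * Real.sin z ≥ 0) :
    ∀ t ∈ Set.Ioc (0 : ℝ) 1,
      0 < grushinF a (t * v) ∧ 0 < grushinF a v ∧
      grushinF a (t * v) / grushinF a v ≥ t ^ 3 :=
  grushin_jacobian_contraction_general a v hv hadm
end

section
/- For all v ∈ (0, π) and a > 0, the inequality 2a²·cos(v) + a·(2·sin(v) − v·cos(v)) ≥ 0 holds. -/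
theorem easier_quadratic_pos_case (v a : ℝ) (hv : v ∈ Set.Ioo 0 Real.pi)
    (ha : 0 < a) (hadm : a * Real.cos v + Real.sin v ≥ 0) :
    2 * a ^ 2 * Real.cos v + a * (2 * Real.sin v - v * Real.cos v) ≥ 0 := by
  obtain ⟨hv0, hvpi⟩ := hv
  rcases le_or_gt (Real.cos v) 0 with hc | hc
  · nlinarith [mul_nonneg ha.le hadm, mul_nonneg hv0.le (neg_nonneg.mpr hc)]
  · have hvlt : v < Real.pi / 2 := by
      by_contra h
      push_neg at h
      exact absurd (Real.cos_nonpos_of_pi_div_two_le_of_le h (by linarith [Real.pi_pos])) (not_le.mpr hc)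
    have htan : v < Real.tan v := Real.lt_tan hv0 hvlt
    have hsin : v * Real.cos v < Real.sin v := by
      rw [Real.tan_eq_sin_div_cos] at htan
      exact (lt_div_iff₀ hc).mp htan
    nlinarith [Real.sin_pos_of_pos_of_lt_pi hv0 hvpi, mul_pos (mul_pos ha ha) hc]
end
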